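/- The Taylor expansion map T₁ : Habiro ring → ℤ[[1-q]] at q = 1 is injective. -/

import Mathlib

open Polynomial

/-- The ideal of `ℤ[q]` generated by `(1-q)(1-q²)⋯(1-qⁿ)`. -/
noncomputable def habiroIdeal (n : ℕ) : Ideal (Polynomial ℤ) :=
  Ideal.span {∏ j ∈ Finset.Icc 1 n, (1 - X ^ j)}

lemma habiroIdeal_antitone {m n : ℕ} (h : m ≤ n) : habiroIdeal n ≤ habiroIdeal m := by
  rw [habiroIdeal, habiroIdeal, Ideal.span_singleton_le_span_singleton]
  exact Finset.prod_dvd_prod_of_subset _ _ _ (Finset.Icc_subset_Icc le_rfl h)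

/-- The transition maps of the inverse system. -/
noncomputable def habiroTrans {m n : ℕ} (h : m ≤ n) :
    Polynomial ℤ ⧸ habiroIdeal n →+* Polynomial ℤ ⧸ habiroIdeal m :=
  Ideal.Quotient.factor (habiroIdeal_antitone h)

/-- The Habiro ring: the inverse limit of `ℤ[q]/((1-q)⋯(1-qⁿ))`, realized as the
subring of compatible families in the product ring. -/
noncomputable def HabiroRing : Subring (∀ n, Polynomial ℤ ⧸ habiroIdeal n) :=
  ⨅ (m : ℕ), ⨅ (n : ℕ), ⨅ (h : m ≤ n),
    RingHom.eqLocus ((habiroTrans h).comp (Pi.evalRingHom _ n)) (Pi.evalRingHom _ m)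

/-- The natural map `ℤ[q] → HabiroRing`. -/
noncomputable def habiroOfPoly : Polynomial ℤ →+* HabiroRing :=
  (Pi.ringHom fun n => Ideal.Quotient.mk (habiroIdeal n)).codRestrict _ (by
    intro p
    simp only [HabiroRing, Subring.mem_iInf]
    intro m n h
    rfl)

lemma habiroIdeal_le_pow (n : ℕ) :
    habiroIdeal n ≤ Ideal.span {((1 : Polynomial ℤ) - X) ^ n} := by
  rw [habiroIdeal, Ideal.span_singleton_le_span_singleton]
  calc ((1 : Polynomial ℤ) - X) ^ n = ∏ _j ∈ Finset.Icc 1 n, ((1 : Polynomial ℤ) - X) := by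
        rw [Finset.prod_const, Nat.card_Icc]; norm_num
    _ ∣ ∏ j ∈ Finset.Icc 1 n, ((1 : Polynomial ℤ) - X ^ j) := by
        refine Finset.prod_dvd_prod_of_dvd _ _ fun j _ => ?_
        simpa using one_sub_dvd_one_sub_pow (X : Polynomial ℤ) j

/-!
Choose lifts `r n ∈ ℤ[q]` of the components. They satisfy `r n ≡ r m` modulo
`(q;q)_m = (1-q)⋯(1-qᵐ)` for `m ≤ n` and `(1-q)ⁿ ∣ r n`, and we must show `(q;q)_m ∣ r m`.
Up to sign `(q;q)_m = ∏_{d ≤ m} Φ_d ^ ⌊m/d⌋`, and distinct cyclotomic polynomials are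
relatively prime in `ℤ[q]`, so it suffices that `Φ_d ^ s ∣ r m` whenever `d s ≤ m`; this is
proved by strong induction on `d`. For `d = 1` it is the vanishing of the Taylor expansion.

For `d ≥ 2` the `(1-q)`-adic information does not reach `Φ_d` directly (`1 - q` is a unit
modulo `Φ_d` when `d` is not a prime power); it is transported from a smaller index `ℓ`-adically.
Write `d = ℓ^c e` with `ℓ` prime, `c > 0`, `ℓ ∤ e`. In characteristic `ℓ`,
`Φ_d = Φ_e ^ (ℓ^c - ℓ^(c-1))`, so `Φ_e ^ ℓ^c ≡ Φ_d · Φ_e ^ ℓ^(c-1) (mod ℓ)`, and raising to the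
power `ℓ^j` gives a congruence modulo `ℓ^(j+1)`. By induction `Φ_e ^ ℓ^(c+j)` divides `r M` for
large `M`, and `r M ≡ r m` modulo `Φ_d ^ s`, so `r m ∈ (Φ_d ^ s, ℓ^N)` for every `N`. As `Φ_d ^ s`
is monic, the remainder of `r m` modulo `Φ_d ^ s` then has coefficients divisible by every
power of `ℓ`, hence vanishes.
-/

noncomputable def habiroProd (n : ℕ) : ℤ[X] := ∏ j ∈ Finset.Icc 1 n, (1 - X ^ j)

lemma mem_habiroIdeal_iff {n : ℕ} {p : ℤ[X]} : p ∈ habiroIdeal n ↔ habiroProd n ∣ p :=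
  Ideal.mem_span_singleton

lemma associated_habiroProd (n : ℕ) :
    Associated (habiroProd n) (∏ d ∈ Finset.Icc 1 n, cyclotomic d ℤ ^ (n / d)) := by
  have hsign : Associated (habiroProd n) (∏ j ∈ Finset.Icc 1 n, (X ^ j - 1 : ℤ[X])) :=
    Associated.prod _ _ _ fun j _ => by
      rw [show (X ^ j - 1 : ℤ[X]) = -(1 - X ^ j) by ring]
      exact (Associated.refl _).neg_right
  convert hsign using 1
  calc ∏ d ∈ Finset.Icc 1 n, cyclotomic d ℤ ^ (n / d)
      = ∏ d ∈ Finset.Icc 1 n, ∏ _j ∈ (Finset.Icc 1 n).filter (d ∣ ·), cyclotomic d ℤ := by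
        refine Finset.prod_congr rfl fun d _ => ?_
        rw [Finset.prod_const, ← Nat.Ioc_filter_dvd_card_eq_div]
        rfl
    _ = ∏ j ∈ Finset.Icc 1 n, ∏ d ∈ j.divisors, cyclotomic d ℤ := by
        refine Finset.prod_comm' fun d j => ?_
        simp only [Finset.mem_filter, Finset.mem_Icc, Nat.mem_divisors]
        constructor
        · rintro ⟨-, hj, hdj⟩
          exact ⟨⟨hdj, by omega⟩, hj⟩
        · rintro ⟨⟨hdj, -⟩, hj⟩
          exact ⟨⟨Nat.pos_of_dvd_of_pos hdj (by omega), (Nat.le_of_dvd (by omega) hdj).trans hj.2⟩,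
            hj, hdj⟩
    _ = ∏ j ∈ Finset.Icc 1 n, (X ^ j - 1 : ℤ[X]) :=
        Finset.prod_congr rfl fun j hj =>
          prod_cyclotomic_eq_X_pow_sub_one (Finset.mem_Icc.1 hj).1 ℤ

lemma cyclotomic_pow_dvd_habiroProd {d s n : ℕ} (h : d * s ≤ n) :
    cyclotomic d ℤ ^ s ∣ habiroProd n := by
  rcases Nat.eq_zero_or_pos d with rfl | hd
  · rw [cyclotomic_zero, one_pow]
    exact one_dvd _
  rcases Nat.eq_zero_or_pos s with rfl | hs
  · rw [pow_zero]
    exact one_dvd _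
  have hdn : d ∈ Finset.Icc 1 n :=
    Finset.mem_Icc.2 ⟨hd, (Nat.le_mul_of_pos_right d hs).trans h⟩
  calc cyclotomic d ℤ ^ s ∣ cyclotomic d ℤ ^ (n / d) :=
        pow_dvd_pow _ ((Nat.le_div_iff_mul_le hd).2 (by rwa [mul_comm]))
    _ ∣ ∏ d ∈ Finset.Icc 1 n, cyclotomic d ℤ ^ (n / d) :=
        Finset.dvd_prod_of_mem (fun d => cyclotomic d ℤ ^ (n / d)) hdn
    _ ∣ habiroProd n := (associated_habiroProd n).symm.dvd

lemma cyclotomic_isRelPrime {a b : ℕ} (ha : 0 < a) (hb : 0 < b) (hab : a ≠ b) :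
    IsRelPrime (cyclotomic a ℤ) (cyclotomic b ℤ) := by
  refine (cyclotomic.irreducible ha).isRelPrime_iff_not_dvd.2 fun h => hab ?_
  exact cyclotomic_injective <| eq_of_monic_of_associated (cyclotomic.monic a ℤ)
    (cyclotomic.monic b ℤ) ((cyclotomic.irreducible ha).associated_of_dvd
      (cyclotomic.irreducible hb) h)

lemma natCast_dvd_iff_map_eq_zero (ℓ : ℕ) (f : ℤ[X]) :
    (ℓ : ℤ[X]) ∣ f ↔ f.map (Int.castRingHom (ZMod ℓ)) = 0 := by
  rw [← map_natCast C, C_dvd_iff_dvd_coeff, Polynomial.ext_iff]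
  simp [ZMod.intCast_zmod_eq_zero_iff_dvd]

lemma natCast_dvd_cyclotomic_pow_sub {ℓ c e : ℕ} (hℓ : ℓ.Prime) (hc : 0 < c) (hℓe : ¬ ℓ ∣ e) :
    (ℓ : ℤ[X]) ∣
      cyclotomic e ℤ ^ ℓ ^ c - cyclotomic (ℓ ^ c * e) ℤ * cyclotomic e ℤ ^ ℓ ^ (c - 1) := by
  have : Fact ℓ.Prime := ⟨hℓ⟩
  rw [natCast_dvd_iff_map_eq_zero, Polynomial.map_sub, Polynomial.map_mul, Polynomial.map_pow,
    Polynomial.map_pow, map_cyclotomic, map_cyclotomic, cyclotomic_mul_prime_pow_eq _ hℓe hc,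
    ← pow_add, Nat.sub_add_cancel (Nat.pow_le_pow_right hℓ.pos (Nat.sub_le c 1)), sub_self]

lemma Int.eq_zero_of_forall_pow_dvd {a z : ℤ} (ha : a.natAbs ≠ 1) (h : ∀ N : ℕ, a ^ N ∣ z) :
    z = 0 := by
  by_contra hz
  obtain ⟨N, hN⟩ := Int.finiteMultiplicity_iff.2 ⟨ha, hz⟩
  exact hN (h _)

lemma Polynomial.Monic.dvd_of_forall_dvd_sub_pow_mul {g f : ℤ[X]} (hg : g.Monic) {ℓ : ℕ}
    (hℓ : ℓ ≠ 1) (h : ∀ N : ℕ, ∃ β, g ∣ f - (ℓ : ℤ[X]) ^ N * β) : g ∣ f := by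
  rw [← modByMonic_eq_zero_iff_dvd hg]
  ext i
  refine Int.eq_zero_of_forall_pow_dvd (a := ℓ) (by simpa using hℓ) fun N => ?_
  obtain ⟨β, hβ⟩ := h N
  rw [modByMonic_eq_of_dvd_sub hg hβ,
    show (ℓ : ℤ[X]) ^ N * β = ((ℓ : ℤ) ^ N) • β by rw [smul_eq_C_mul]; simp,
    smul_modByMonic, coeff_smul, smul_eq_mul]
  exact dvd_mul_right _ _

/-- Lifts `r n ∈ ℤ[q]` of the components of an element of the Habiro ring whose Taylor
expansion at `q = 1` vanishes. -/
structure IsTaylorNullSystem (r : ℕ → ℤ[X]) : Prop where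
  habiroProd_dvd_sub : ∀ ⦃m n : ℕ⦄, m ≤ n → habiroProd m ∣ r n - r m
  one_sub_X_pow_dvd : ∀ n, (1 - X) ^ n ∣ r n

namespace IsTaylorNullSystem

variable {r : ℕ → ℤ[X]}

lemma cyclotomic_one_pow_dvd (hr : IsTaylorNullSystem r) {s m : ℕ} (h : s ≤ m) :
    cyclotomic 1 ℤ ^ s ∣ r m := by
  have h1 : cyclotomic 1 ℤ ∣ 1 - X := ⟨-1, by rw [cyclotomic_one]; ring⟩
  exact (pow_dvd_pow_of_dvd h1 s).trans ((pow_dvd_pow _ h).trans (hr.one_sub_X_pow_dvd m))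

lemma exists_cyclotomic_pow_dvd_sub_prime_pow_mul (hr : IsTaylorNullSystem r) {ℓ c e : ℕ}
    (hℓ : ℓ.Prime) (hc : 0 < c) (hℓe : ¬ ℓ ∣ e)
    (he : ∀ s m, e * s ≤ m → cyclotomic e ℤ ^ s ∣ r m) {s m j : ℕ}
    (hm : ℓ ^ c * e * s ≤ m) (hsj : s ≤ ℓ ^ j) :
    ∃ β, cyclotomic (ℓ ^ c * e) ℤ ^ s ∣ r m - (ℓ : ℤ[X]) ^ (j + 1) * β := by
  set Φ := cyclotomic (ℓ ^ c * e) ℤ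
  set B := cyclotomic e ℤ ^ ℓ ^ (c - 1)
  set M := max m (e * ℓ ^ (c + j))
  obtain ⟨w, hw⟩ : cyclotomic e ℤ ^ ℓ ^ (c + j) ∣ r M := he _ _ (le_max_right _ _)
  obtain ⟨δ, hδ⟩ : (ℓ : ℤ[X]) ^ (j + 1) ∣ cyclotomic e ℤ ^ ℓ ^ (c + j) - (Φ * B) ^ ℓ ^ j := by
    rw [pow_add ℓ c j, pow_mul]
    exact dvd_sub_pow_of_dvd_sub (natCast_dvd_cyclotomic_pow_sub hℓ hc hℓe) j
  obtain ⟨t, ht⟩ := hr.habiroProd_dvd_sub (le_max_left m (e * ℓ ^ (c + j)))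
  refine ⟨δ * w, ?_⟩
  have hrm : r m - (ℓ : ℤ[X]) ^ (j + 1) * (δ * w)
      = Φ ^ ℓ ^ j * (B ^ ℓ ^ j * w) - habiroProd m * t := by
    linear_combination hw - ht + w * hδ
  rw [hrm]
  exact dvd_sub ((pow_dvd_pow Φ hsj).mul_right _) ((cyclotomic_pow_dvd_habiroProd hm).mul_right t)

lemma cyclotomic_prime_pow_mul_pow_dvd (hr : IsTaylorNullSystem r) {ℓ c e : ℕ}
    (hℓ : ℓ.Prime) (hc : 0 < c) (hℓe : ¬ ℓ ∣ e)
    (he : ∀ s m, e * s ≤ m → cyclotomic e ℤ ^ s ∣ r m) {s m : ℕ}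
    (hm : ℓ ^ c * e * s ≤ m) : cyclotomic (ℓ ^ c * e) ℤ ^ s ∣ r m := by
  refine ((cyclotomic.monic _ ℤ).pow s).dvd_of_forall_dvd_sub_pow_mul hℓ.ne_one fun N => ?_
  have hs : s ≤ ℓ ^ (s + N) :=
    (Nat.lt_pow_self hℓ.one_lt).le.trans (Nat.pow_le_pow_right hℓ.pos (Nat.le_add_right s N))
  obtain ⟨β, hβ⟩ := hr.exists_cyclotomic_pow_dvd_sub_prime_pow_mul hℓ hc hℓe he hm hs
  refine ⟨(ℓ : ℤ[X]) ^ (s + 1) * β, ?_⟩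
  rwa [← mul_assoc, ← pow_add, show N + (s + 1) = s + N + 1 by ring]

lemma cyclotomic_pow_dvd (hr : IsTaylorNullSystem r) {d s m : ℕ} (hd : 0 < d)
    (hm : d * s ≤ m) : cyclotomic d ℤ ^ s ∣ r m := by
  induction d using Nat.strong_induction_on generalizing s m with
  | _ d ih =>
  obtain rfl | hd1 := eq_or_ne d 1
  · exact hr.cyclotomic_one_pow_dvd (by rwa [one_mul] at hm)
  set ℓ := d.minFac
  set c := d.factorization ℓ
  set e := ordCompl[ℓ] d
  have hℓ : ℓ.Prime := Nat.minFac_prime hd1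
  have hc : 0 < c := hℓ.factorization_pos_of_dvd hd.ne' (Nat.minFac_dvd d)
  have hde : ℓ ^ c * e = d := Nat.ordProj_mul_ordCompl_eq_self d ℓ
  have he : 0 < e := Nat.ordCompl_pos ℓ hd.ne'
  have hed : e < d := hde ▸ lt_mul_of_one_lt_left he (Nat.one_lt_pow hc.ne' hℓ.one_lt)
  rw [← hde] at hm ⊢
  exact hr.cyclotomic_prime_pow_mul_pow_dvd hℓ hc (Nat.not_dvd_ordCompl hℓ hd.ne')
    (fun _ _ => ih e hed he) hm

lemma habiroProd_dvd (hr : IsTaylorNullSystem r) (m : ℕ) : habiroProd m ∣ r m := by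
  refine (associated_habiroProd m).dvd.trans (Finset.prod_dvd_of_isRelPrime ?_ fun d hd => ?_)
  · intro a ha b hb hab
    exact (cyclotomic_isRelPrime (Finset.mem_Icc.1 ha).1 (Finset.mem_Icc.1 hb).1 hab).pow
  · exact hr.cyclotomic_pow_dvd (Finset.mem_Icc.1 hd).1 (Nat.mul_div_le m d)

end IsTaylorNullSystem

lemma habiroTrans_apply_of_mem {a : ∀ n, Polynomial ℤ ⧸ habiroIdeal n} (ha : a ∈ HabiroRing)
    {m n : ℕ} (h : m ≤ n) : habiroTrans h (a n) = a m := by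
  simp only [HabiroRing, Subring.mem_iInf] at ha
  exact ha m n h

/-- the Taylor expansion map `T₁ : Habiro ring → ℤ[[1-q]]` at `q = 1` is
injective: an element of the Habiro ring whose image in every `ℤ[q]/(1-q)ⁿ` vanishes
(i.e. whose Taylor expansion at `1` is zero) is itself zero. -/
theorem habiro_taylor_at_one_injective (x : HabiroRing)
    (hx : ∀ n : ℕ,
      Ideal.Quotient.factor (habiroIdeal_le_pow n) ((x : ∀ n, Polynomial ℤ ⧸ habiroIdeal n) n)
        = 0) :
    x = 0 := by
  choose r hr using fun n =>
    Ideal.Quotient.mk_surjective ((x : ∀ n, Polynomial ℤ ⧸ habiroIdeal n) n)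
  have hnull : IsTaylorNullSystem r := by
    refine ⟨fun m n hmn => ?_, fun n => ?_⟩
    · rw [← mem_habiroIdeal_iff, ← Ideal.Quotient.eq, hr m, ← habiroTrans_apply_of_mem x.2 hmn,
        ← hr n]
      rfl
    · rw [← Ideal.mem_span_singleton, ← Ideal.Quotient.eq_zero_iff_mem, ← hx n, ← hr]
      rfl
  ext n : 2
  rw [← hr n]
  exact Ideal.Quotient.eq_zero_iff_mem.2 (mem_habiroIdeal_iff.2 (hnull.habiroProd_dvd n))
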